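/- arXiv:2501.07673 — 2 statements merged into one kernel-verified Lean document; each statement's English description precedes it below -/
import Mathlib

section
/- Let X be an arithmetic L-space and U a clopen upset of X. Then cl(core_d U) = X if and only if Y_d ⊆ U. -/
open Set Topology

variable {X : Type*} [TopologicalSpace X] [PartialOrder X]

/-- The downward closure `↓A` of a subset of a poset. -/
def dwC (A : Set X) : Set X := {x : X | ∃ a ∈ A, x ≤ a}

/-- The upward closure `↑A` of a subset of a poset. -/
def upC (A : Set X) : Set X := {x : X | ∃ a ∈ A, a ≤ x}

/-- The set of maximal points of a subset of a poset. -/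
def maxOf (A : Set X) : Set X := {x ∈ A | ∀ z ∈ A, x ≤ z → z = x}

/-- The set of minimal points of a subset of a poset. -/
def minOf (A : Set X) : Set X := {x ∈ A | ∀ z ∈ A, z ≤ x → z = x}

/-- A Priestley space: compact with the Priestley separation axiom. -/
def IsPriestley (X : Type*) [TopologicalSpace X] [PartialOrder X] : Prop :=
  CompactSpace X ∧
    ∀ x y : X, ¬x ≤ y → ∃ U : Set X, IsClopen U ∧ IsUpperSet U ∧ x ∈ U ∧ y ∉ U

/-- An L-space: a Priestley space where the closure of every open upset is an open upset. -/
def IsLSpace (X : Type*) [TopologicalSpace X] [PartialOrder X] : Prop :=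
  IsPriestley X ∧
    ∀ U : Set X, IsOpen U → IsUpperSet U → IsOpen (closure U) ∧ IsUpperSet (closure U)

/-- The set `Y` of localic points: those `y` with `↓y` clopen. -/
def localicPts (X : Type*) [TopologicalSpace X] [PartialOrder X] : Set X :=
  {y : X | IsClopen (dwC ({y} : Set X))}

/-- A Scott upset: a closed upset whose minimal points are localic. -/
def IsScottUp (F : Set X) : Prop :=
  IsClosed F ∧ IsUpperSet F ∧ minOf F ⊆ localicPts X

/-- The collection of clopen Scott upsets of `X`. -/
def ClopSUp (X : Type*) [TopologicalSpace X] [PartialOrder X] : Set (Set X) :=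
  {U : Set X | IsClopen U ∧ IsScottUp U}

/-- The core of a clopen upset: the union of the clopen Scott upsets inside it. -/
def coreC (U : Set X) : Set X := ⋃₀ {V : Set X | V ∈ ClopSUp X ∧ V ⊆ U}

/-- An algebraic L-space: the core of each clopen upset is dense in it. -/
def IsAlgebraicLSpace (X : Type*) [TopologicalSpace X] [PartialOrder X] : Prop :=
  IsLSpace X ∧ ∀ U : Set X, IsClopen U → IsUpperSet U → U ⊆ closure (coreC U)

/-- An arithmetic L-space: an algebraic L-space in which the intersection of any
two clopen Scott upsets is again a Scott upset. -/
def IsArithmeticLSpace (X : Type*) [TopologicalSpace X] [PartialOrder X] : Prop :=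
  IsAlgebraicLSpace X ∧
    ∀ U V : Set X, U ∈ ClopSUp X → V ∈ ClopSUp X → IsScottUp (U ∩ V)

/-- A nuclear subset of an L-space. -/
def IsNuclearSub (N : Set X) : Prop :=
  IsClosed N ∧ ∀ U : Set X, IsClopen U → IsClopen (dwC (U ∩ N))

/-- The nucleus `j_N` associated to a nuclear subset: `j_N U = X \ ↓(N \ U)`. -/
def jN (N U : Set X) : Set X := (dwC (N \ U))ᶜ

/-- A nuclear subset is inductive if `↑(F ∩ N)` is a Scott upset for every Scott upset `F`. -/
def IsInductiveNuclear (N : Set X) : Prop :=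
  ∀ F : Set X, IsScottUp F → IsScottUp (upC (F ∩ N))

/-- The pseudocomplement `V* = X \ ↓V`. -/
def starC (V : Set X) : Set X := (dwC V)ᶜ

/-- The `d`-nucleus on clopen upsets: `d U = cl ⋃ {V** : V ∈ ClopSUp X, V ⊆ U}`. -/
def dOp (U : Set X) : Set X :=
  closure (⋃₀ {W : Set X | ∃ V ∈ ClopSUp X, V ⊆ U ∧ W = starC (starC V)})

/-- The `d`-core: `core_d U = ⋃ {d V : V ∈ ClopSUp X, V ⊆ U}`. -/
def coreD (U : Set X) : Set X :=
  ⋃₀ {W : Set X | ∃ V ∈ ClopSUp X, V ⊆ U ∧ W = dOp V}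

/-- The topology on a subset `S ⊆ X` whose opens are (generated by) the traces of
clopen upsets of `X`. -/
def traceTop (S : Set X) : TopologicalSpace S :=
  TopologicalSpace.generateFrom
    {V : Set S | ∃ U : Set X, IsClopen U ∧ IsUpperSet U ∧ V = Subtype.val ⁻¹' U}


section Statement14Aux

set_option linter.unusedSectionVars false

variable {X : Type*} [TopologicalSpace X] [PartialOrder X]

lemma st14_dwC_mono {A B : Set X} (h : A ⊆ B) : dwC A ⊆ dwC B := by
  rintro x ⟨a, ha, hx⟩; exact ⟨a, h ha, hx⟩

lemma st14_mem_dwC_self {A : Set X} {a : X} (ha : a ∈ A) : a ∈ dwC A := ⟨a, ha, le_refl a⟩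

lemma st14_isLowerSet_dwC (A : Set X) : IsLowerSet (dwC A) := by
  rintro a b hba ⟨c, hc, hac⟩; exact ⟨c, hc, hba.trans hac⟩

lemma st14_dwC_union (A B : Set X) : dwC (A ∪ B) = dwC A ∪ dwC B := by
  ext x
  constructor
  · rintro ⟨a, ha | ha, hx⟩
    · exact Or.inl ⟨a, ha, hx⟩
    · exact Or.inr ⟨a, ha, hx⟩
  · rintro (⟨a, ha, hx⟩ | ⟨a, ha, hx⟩)
    · exact ⟨a, Or.inl ha, hx⟩
    · exact ⟨a, Or.inr ha, hx⟩

lemma st14_isUpperSet_jN (N A : Set X) : IsUpperSet (jN N A) :=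
  (st14_isLowerSet_dwC _).compl

lemma st14_subset_jN {N A : Set X} (hA : IsUpperSet A) : A ⊆ jN N A := by
  intro x hx hmem
  obtain ⟨n, hn, hxn⟩ := hmem
  exact hn.2 (hA hxn hx)

lemma st14_jN_mono {N A B : Set X} (h : A ⊆ B) : jN N A ⊆ jN N B := by
  apply compl_subset_compl.mpr
  apply st14_dwC_mono
  exact fun x hx => ⟨hx.1, fun hB => hx.2 (h hB)⟩

lemma st14_jN_inter (N A B : Set X) : jN N (A ∩ B) = jN N A ∩ jN N B := by
  unfold jN
  rw [← compl_union, ← st14_dwC_union, Set.diff_inter]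

lemma st14_jN_idem (N A : Set X) : jN N (jN N A) = jN N A := by
  unfold jN
  congr 1
  apply subset_antisymm
  · rintro x ⟨n, ⟨hnN, hn⟩, hxn⟩
    have hn' : n ∈ dwC (N \ A) := not_not.mp hn
    obtain ⟨n', hn', hnn'⟩ := hn'
    exact ⟨n', hn', hxn.trans hnn'⟩
  · rintro x ⟨n, hn, hxn⟩
    exact ⟨n, ⟨hn.1, fun h => h (st14_mem_dwC_self hn)⟩, hxn⟩

lemma st14_isClopen_jN {N : Set X} (hN : IsNuclearSub N) {A : Set X} (hA : IsClopen A) :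
    IsClopen (jN N A) := by
  have h : N \ A = Aᶜ ∩ N := by ext x; simp only [Set.mem_diff, Set.mem_inter_iff, Set.mem_compl_iff]; tauto
  rw [jN, h]
  exact (hN.2 _ hA.compl).compl

lemma st14_isClosed_le (hP : IsPriestley X) (z : X) : IsClosed {x : X | x ≤ z} := by
  rw [← isOpen_compl_iff, isOpen_iff_forall_mem_open]
  intro x hx
  obtain ⟨A, hA, hAup, hxA, hzA⟩ := hP.2 x z hx
  exact ⟨A, fun a ha hle => hzA (hAup hle ha), hA.2, hxA⟩

lemma st14_isClosed_ge (hP : IsPriestley X) (z : X) : IsClosed {x : X | z ≤ x} := by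
  rw [← isOpen_compl_iff, isOpen_iff_forall_mem_open]
  intro x hx
  obtain ⟨A, hA, hAup, hzA, hxA⟩ := hP.2 z x hx
  exact ⟨Aᶜ, fun a ha hle => ha (hAup hle hzA), hA.1.isOpen_compl, hxA⟩

lemma st14_le_of_clopen_up (hP : IsPriestley X) {x q : X}
    (h : ∀ A : Set X, IsClopen A → IsUpperSet A → x ∈ A → q ∈ A) : x ≤ q := by
  by_contra hc
  obtain ⟨A, hA, hAup, hxA, hqA⟩ := hP.2 x q hc
  exact hqA (h A hA hAup hxA)

lemma st14_exists_minimal (hP : IsPriestley X) {F : Set X} (hF : IsClosed F) {v : X}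
    (hv : v ∈ F) : ∃ m ∈ minOf F, m ≤ v := by
  haveI : CompactSpace X := hP.1
  set S : Set (Set X) := {t | ∃ z, z ∈ F ∧ z ≤ v ∧ t = F ∩ {x | x ≤ z}} with hS
  have key : ∀ c ⊆ S, IsChain (· ⊆ ·) c → c.Nonempty → ∃ lb ∈ S, ∀ s ∈ c, lb ⊆ s := by
    intro c hcS hchain hcne
    haveI : Nonempty c := hcne.to_subtype
    have hclosed : ∀ t : c, IsClosed (t : Set X) := by
      rintro ⟨t, ht⟩
      obtain ⟨z, hz, hzv, rfl⟩ := hcS ht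
      exact hF.inter (st14_isClosed_le hP z)
    have hne : ∀ t : c, (t : Set X).Nonempty := by
      rintro ⟨t, ht⟩
      obtain ⟨z, hz, hzv, rfl⟩ := hcS ht
      exact ⟨z, hz, le_refl z⟩
    have hdir : Directed (· ⊇ ·) (fun t : c => (t : Set X)) := by
      intro i j
      rcases hchain.total i.2 j.2 with h | h
      · exact ⟨i, Subset.rfl, h⟩
      · exact ⟨j, h, Subset.rfl⟩
    obtain ⟨q, hq⟩ := IsCompact.nonempty_iInter_of_directed_nonempty_isCompact_isClosed _
      hdir hne (fun t => (hclosed t).isCompact) hclosed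
    have hmem := Set.mem_iInter.mp hq
    have hqF : q ∈ F ∧ q ≤ v := by
      obtain ⟨t, ht⟩ := hcne
      have hqt := hmem ⟨t, ht⟩
      obtain ⟨z, hz, hzv, rfl⟩ := hcS ht
      exact ⟨hqt.1, le_trans hqt.2 hzv⟩
    refine ⟨F ∩ {x | x ≤ q}, ⟨q, hqF.1, hqF.2, rfl⟩, ?_⟩
    intro t ht
    have hqt := hmem ⟨t, ht⟩
    obtain ⟨z, hz, hzv, rfl⟩ := hcS ht
    exact fun x hx => ⟨hx.1, le_trans hx.2 hqt.2⟩
  obtain ⟨m, hmsub, hmin⟩ := zorn_superset_nonempty S key (F ∩ {x | x ≤ v}) ⟨v, hv, le_refl v, rfl⟩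
  obtain ⟨z₀, hz₀F, hz₀v, rfl⟩ := hmin.1
  refine ⟨z₀, ⟨hz₀F, ?_⟩, hz₀v⟩
  intro u hu huz
  have h1 : F ∩ {x | x ≤ u} ∈ S := ⟨u, hu, le_trans huz hz₀v, rfl⟩
  have h2 : F ∩ {x | x ≤ u} ⊆ F ∩ {x | x ≤ z₀} := fun x hx => ⟨hx.1, le_trans hx.2 huz⟩
  have h3 := hmin.2 h1 h2
  have h4 : z₀ ∈ F ∩ {x | x ≤ u} := h3 ⟨hz₀F, le_refl z₀⟩
  exact le_antisymm huz h4.2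

lemma st14_exists_maximal (hP : IsPriestley X) {F : Set X} (hF : IsClosed F) {v : X}
    (hv : v ∈ F) : ∃ m ∈ maxOf F, v ≤ m := by
  haveI : CompactSpace X := hP.1
  set S : Set (Set X) := {t | ∃ z, z ∈ F ∧ v ≤ z ∧ t = F ∩ {x | z ≤ x}} with hS
  have key : ∀ c ⊆ S, IsChain (· ⊆ ·) c → c.Nonempty → ∃ lb ∈ S, ∀ s ∈ c, lb ⊆ s := by
    intro c hcS hchain hcne
    haveI : Nonempty c := hcne.to_subtype
    have hclosed : ∀ t : c, IsClosed (t : Set X) := by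
      rintro ⟨t, ht⟩
      obtain ⟨z, hz, hzv, rfl⟩ := hcS ht
      exact hF.inter (st14_isClosed_ge hP z)
    have hne : ∀ t : c, (t : Set X).Nonempty := by
      rintro ⟨t, ht⟩
      obtain ⟨z, hz, hzv, rfl⟩ := hcS ht
      exact ⟨z, hz, le_refl z⟩
    have hdir : Directed (· ⊇ ·) (fun t : c => (t : Set X)) := by
      intro i j
      rcases hchain.total i.2 j.2 with h | h
      · exact ⟨i, Subset.rfl, h⟩
      · exact ⟨j, h, Subset.rfl⟩
    obtain ⟨q, hq⟩ := IsCompact.nonempty_iInter_of_directed_nonempty_isCompact_isClosed _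
      hdir hne (fun t => (hclosed t).isCompact) hclosed
    have hmem := Set.mem_iInter.mp hq
    have hqF : q ∈ F ∧ v ≤ q := by
      obtain ⟨t, ht⟩ := hcne
      have hqt := hmem ⟨t, ht⟩
      obtain ⟨z, hz, hzv, rfl⟩ := hcS ht
      exact ⟨hqt.1, le_trans hzv hqt.2⟩
    refine ⟨F ∩ {x | q ≤ x}, ⟨q, hqF.1, hqF.2, rfl⟩, ?_⟩
    intro t ht
    have hqt := hmem ⟨t, ht⟩
    obtain ⟨z, hz, hzv, rfl⟩ := hcS ht
    exact fun x hx => ⟨hx.1, le_trans hqt.2 hx.2⟩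
  obtain ⟨m, hmsub, hmin⟩ := zorn_superset_nonempty S key (F ∩ {x | v ≤ x}) ⟨v, hv, le_refl v, rfl⟩
  obtain ⟨z₀, hz₀F, hz₀v, rfl⟩ := hmin.1
  refine ⟨z₀, ⟨hz₀F, ?_⟩, hz₀v⟩
  intro u hu huz
  have h1 : F ∩ {x | u ≤ x} ∈ S := ⟨u, hu, le_trans hz₀v huz, rfl⟩
  have h2 : F ∩ {x | u ≤ x} ⊆ F ∩ {x | z₀ ≤ x} := fun x hx => ⟨hx.1, le_trans huz hx.2⟩
  have h3 := hmin.2 h1 h2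
  have h4 : z₀ ∈ F ∩ {x | u ≤ x} := h3 ⟨hz₀F, le_refl z₀⟩
  exact le_antisymm h4.2 huz

/-- Clopen Scott upsets are "compact elements": if such a set lies in the closure of the
union of a chain of open upsets, it lies in one of them. -/
lemma st14_scott_compact (hP : IsPriestley X) {c : Set (Set X)}
    (hchain : IsChain (· ⊆ ·) c) (hcne : c.Nonempty)
    (hop : ∀ P ∈ c, IsOpen P) (hup : ∀ P ∈ c, IsUpperSet P)
    {V : Set X} (hV : V ∈ ClopSUp X) (hsub : V ⊆ closure (⋃₀ c)) :
    ∃ P ∈ c, V ⊆ P := by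
  haveI : CompactSpace X := hP.1
  have hcover : V ⊆ ⋃₀ c := by
    intro v hvV
    obtain ⟨m, hm, hmv⟩ := st14_exists_minimal hP hV.2.1 hvV
    have hmY : IsClopen (dwC ({m} : Set X)) := hV.2.2.2 hm
    have hmc : m ∈ closure (⋃₀ c) := hsub hm.1
    rw [mem_closure_iff] at hmc
    obtain ⟨z, hz1, hz2⟩ := hmc _ hmY.2 ⟨m, rfl, le_refl m⟩
    obtain ⟨a, ha, hza⟩ := hz1
    rw [Set.mem_singleton_iff] at ha
    subst ha
    obtain ⟨P, hPc, hzP⟩ := hz2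
    exact ⟨P, hPc, hup P hPc (le_trans hza hmv) hzP⟩
  have hVcpt : IsCompact V := hV.2.1.isCompact
  haveI : Nonempty c := hcne.to_subtype
  have hdir : Directed (· ⊆ ·) (fun t : c => (t : Set X)) := by
    intro i j
    rcases hchain.total i.2 j.2 with h | h
    · exact ⟨j, h, Subset.rfl⟩
    · exact ⟨i, Subset.rfl, h⟩
  rw [Set.sUnion_eq_iUnion] at hcover
  obtain ⟨i, hi⟩ := hVcpt.elim_directed_cover (fun t : c => (t : Set X))
    (fun t => hop t t.2) hcover hdir
  exact ⟨i, i.2, hi⟩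

/-- The key hard lemma: for the nuclear set realizing the `d`-nucleus,
`Y_d ⊆ U` forces `N ⊆ U`. -/
lemma st14_main (hX : IsArithmeticLSpace X) {N : Set X} (hN : IsNuclearSub N)
    (hNd : ∀ U : Set X, IsClopen U → IsUpperSet U → jN N U = dOp U)
    {U : Set X} (hU : IsClopen U) (hUup : IsUpperSet U)
    (hY : N ∩ localicPts X ⊆ U) : N ⊆ U := by
  have hP : IsPriestley X := hX.1.1.1
  haveI : CompactSpace X := hP.1
  by_contra hcon
  obtain ⟨n₀, hn₀N, hn₀U⟩ := Set.not_subset.mp hcon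
  set P₀ := jN N U with hP₀def
  have hP₀clopen : IsClopen P₀ := st14_isClopen_jN hN hU
  have hP₀up : IsUpperSet P₀ := st14_isUpperSet_jN N U
  have hUP₀ : U ⊆ P₀ := st14_subset_jN hUup
  have hP₀idem : jN N P₀ = P₀ := st14_jN_idem N U
  have hn₀P₀ : n₀ ∉ P₀ := fun h => h ⟨n₀, ⟨hn₀N, hn₀U⟩, le_refl n₀⟩
  -- a clopen Scott upset not contained in P₀
  have hWex : ∃ W ∈ ClopSUp X, ¬ W ⊆ P₀ := by
    by_contra h
    push_neg at h
    have hcore : coreC (Set.univ : Set X) ⊆ P₀ := by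
      rintro x ⟨W, ⟨hWc, -⟩, hxW⟩
      exact h W hWc hxW
    have hdense := hX.1.2 Set.univ isClopen_univ isUpperSet_univ
    have huniv : (Set.univ : Set X) ⊆ P₀ :=
      hdense.trans ((closure_mono hcore).trans (le_of_eq hP₀clopen.1.closure_eq))
    exact hn₀P₀ (huniv (Set.mem_univ n₀))
  obtain ⟨W, hWS, hWP₀⟩ := hWex
  set Pfam : Set (Set X) :=
    {P | IsClopen P ∧ IsUpperSet P ∧ U ⊆ P ∧ jN N P = P ∧ ¬ W ⊆ P} with hPfam
  have hP₀mem : P₀ ∈ Pfam := ⟨hP₀clopen, hP₀up, hUP₀, hP₀idem, hWP₀⟩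
  have hzorn : ∀ c ⊆ Pfam, IsChain (· ⊆ ·) c → c.Nonempty → ∃ ub ∈ Pfam, ∀ s ∈ c, s ⊆ ub := by
    intro c hcPfam hchain hcne
    set v := closure (⋃₀ c) with hv
    have hopen : ∀ P ∈ c, IsOpen P := fun P hPc => (hcPfam hPc).1.2
    have hupc : ∀ P ∈ c, IsUpperSet P := fun P hPc => (hcPfam hPc).2.1
    have hops : IsOpen (⋃₀ c) := isOpen_sUnion hopen
    have hups : IsUpperSet (⋃₀ c) := by
      intro a b hab ha
      obtain ⟨P, hPc, haP⟩ := ha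
      exact ⟨P, hPc, hupc P hPc hab haP⟩
    obtain ⟨hvo, hvu⟩ := hX.1.1.2 _ hops hups
    have hvclopen : IsClopen v := ⟨isClosed_closure, hvo⟩
    have hsubv : ∀ P ∈ c, P ⊆ v := fun P hPc =>
      (Set.subset_sUnion_of_mem hPc).trans subset_closure
    have hUv : U ⊆ v := by
      obtain ⟨P, hPc⟩ := hcne
      exact (hcPfam hPc).2.2.1.trans (hsubv P hPc)
    have hdval : dOp v ⊆ v := by
      unfold dOp
      apply closure_minimal _ isClosed_closure
      rintro x ⟨Wx, ⟨V', hV'S, hV'v, rfl⟩, hxW⟩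
      obtain ⟨P, hPc, hV'P⟩ := st14_scott_compact hP hchain hcne hopen hupc hV'S hV'v
      have hmem1 : starC (starC V') ∈
          {W : Set X | ∃ V ∈ ClopSUp X, V ⊆ P ∧ W = starC (starC V)} := ⟨V', hV'S, hV'P, rfl⟩
      have h1 : starC (starC V') ⊆ dOp P :=
        (Set.subset_sUnion_of_mem hmem1).trans subset_closure
      have h2 : dOp P = P := (hNd P (hcPfam hPc).1 (hcPfam hPc).2.1).symm.trans (hcPfam hPc).2.2.2.1
      exact hsubv P hPc (h2 ▸ h1 hxW)
    have hjv : jN N v = v := by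
      have heq := hNd v hvclopen hvu
      exact subset_antisymm (heq ▸ hdval) (st14_subset_jN hvu)
    have hWv : ¬ W ⊆ v := by
      intro hWsub
      obtain ⟨P, hPc, hWP⟩ := st14_scott_compact hP hchain hcne hopen hupc hWS hWsub
      exact (hcPfam hPc).2.2.2.2 hWP
    exact ⟨v, ⟨hvclopen, hvu, hUv, hjv, hWv⟩, hsubv⟩
  obtain ⟨P, hP₀P, hPmax⟩ := zorn_subset_nonempty Pfam hzorn P₀ hP₀mem
  obtain ⟨hPclopen, hPup, hUP, hPidem, hWP⟩ := hPmax.1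
  -- P is prime
  have hprime : ∀ A B : Set X, IsClopen A → IsUpperSet A → IsClopen B → IsUpperSet B →
      A ∩ B ⊆ P → A ⊆ P ∨ B ⊆ P := by
    intro A B hA hAup hB hBup hAB
    by_contra hcontra
    push_neg at hcontra
    obtain ⟨hAP, hBP⟩ := hcontra
    have key : ∀ C : Set X, IsClopen C → IsUpperSet C → ¬ C ⊆ P → W ⊆ jN N (P ∪ C) := by
      intro C hC hCup hCP
      by_contra hWC
      have hPCup : IsUpperSet (P ∪ C) := hPup.union hCup
      have hPsub : P ⊆ jN N (P ∪ C) := Set.subset_union_left.trans (st14_subset_jN hPCup)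
      have hmem : jN N (P ∪ C) ∈ Pfam :=
        ⟨st14_isClopen_jN hN (hPclopen.union hC), st14_isUpperSet_jN _ _,
          hUP.trans hPsub, st14_jN_idem _ _, hWC⟩
      have hle := hPmax.2 hmem hPsub
      obtain ⟨x, hxC, hxP⟩ := Set.not_subset.mp hCP
      exact hxP (hle (st14_subset_jN hPCup (Or.inr hxC)))
    have hWA := key A hA hAup hAP
    have hWB := key B hB hBup hBP
    have hsub : W ⊆ jN N P := by
      have hinter : W ⊆ jN N (P ∪ A) ∩ jN N (P ∪ B) := Set.subset_inter hWA hWB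
      rw [← st14_jN_inter, ← Set.union_inter_distrib_left] at hinter
      exact hinter.trans (st14_jN_mono (Set.union_subset Subset.rfl hAB))
    rw [hPidem] at hsub
    exact hWP hsub
  -- Pᶜ is a directed closed downset with a top element
  have hPcdown : IsLowerSet Pᶜ := hPup.compl
  have hPccl : IsClosed (Pᶜ : Set X) := hPclopen.2.isClosed_compl
  obtain ⟨w, hwW, hwP⟩ := Set.not_subset.mp hWP
  have hdirected : ∀ x₁ ∈ (Pᶜ : Set X), ∀ x₂ ∈ (Pᶜ : Set X),
      ∃ z ∈ (Pᶜ : Set X), x₁ ≤ z ∧ x₂ ≤ z := by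
    intro x₁ hx₁ x₂ hx₂
    by_contra hcon2
    push_neg at hcon2
    let ι := {A : Set X // IsClopen A ∧ IsUpperSet A ∧ x₁ ∈ A} ×
      {B : Set X // IsClopen B ∧ IsUpperSet B ∧ x₂ ∈ B}
    let iuniv : ι := ⟨⟨Set.univ, isClopen_univ, isUpperSet_univ, Set.mem_univ x₁⟩,
      ⟨Set.univ, isClopen_univ, isUpperSet_univ, Set.mem_univ x₂⟩⟩
    haveI : Nonempty ι := ⟨iuniv⟩
    have hdir : Directed (· ⊇ ·) (fun i : ι => i.1.1 ∩ i.2.1 ∩ Pᶜ) := by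
      intro i j
      refine ⟨⟨⟨i.1.1 ∩ j.1.1, i.1.2.1.inter j.1.2.1, i.1.2.2.1.inter j.1.2.2.1,
        ⟨i.1.2.2.2, j.1.2.2.2⟩⟩,
        ⟨i.2.1 ∩ j.2.1, i.2.2.1.inter j.2.2.1, i.2.2.2.1.inter j.2.2.2.1,
        ⟨i.2.2.2.2, j.2.2.2.2⟩⟩⟩, ?_, ?_⟩
      · exact fun x hx => ⟨⟨hx.1.1.1, hx.1.2.1⟩, hx.2⟩
      · exact fun x hx => ⟨⟨hx.1.1.2, hx.1.2.2⟩, hx.2⟩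
    have hne : ∀ i : ι, (i.1.1 ∩ i.2.1 ∩ Pᶜ).Nonempty := by
      intro i
      rcases (i.1.1 ∩ i.2.1 ∩ Pᶜ).eq_empty_or_nonempty with h | h
      · exfalso
        have hsubP : i.1.1 ∩ i.2.1 ⊆ P := by
          intro x hx
          by_contra hxP
          exact (Set.eq_empty_iff_forall_notMem.mp h x) ⟨hx, hxP⟩
        rcases hprime _ _ i.1.2.1 i.1.2.2.1 i.2.2.1 i.2.2.2.1 hsubP with hh | hh
        · exact hx₁ (hh i.1.2.2.2)
        · exact hx₂ (hh i.2.2.2.2)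
      · exact h
    have hcl : ∀ i : ι, IsClosed (i.1.1 ∩ i.2.1 ∩ Pᶜ) :=
      fun i => (i.1.2.1.1.inter i.2.2.1.1).inter hPccl
    obtain ⟨q, hq⟩ := IsCompact.nonempty_iInter_of_directed_nonempty_isCompact_isClosed _
      hdir hne (fun i => (hcl i).isCompact) hcl
    have hmem := Set.mem_iInter.mp hq
    have hqP : q ∈ (Pᶜ : Set X) := (hmem iuniv).2
    have hq1 : x₁ ≤ q := st14_le_of_clopen_up hP (fun A hA hAu hx₁A =>
      (hmem ⟨⟨A, hA, hAu, hx₁A⟩, iuniv.2⟩).1.1)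
    have hq2 : x₂ ≤ q := st14_le_of_clopen_up hP (fun B hB hBu hx₂B =>
      (hmem ⟨iuniv.1, ⟨B, hB, hBu, hx₂B⟩⟩).1.2)
    exact hcon2 q hqP hq1 hq2
  obtain ⟨y, hy, hwy⟩ := st14_exists_maximal hP hPccl hwP
  have htop : ∀ x ∈ (Pᶜ : Set X), x ≤ y := by
    intro x hx
    obtain ⟨y', hy', hxy'⟩ := st14_exists_maximal hP hPccl hx
    obtain ⟨z, hz, hyz, hy'z⟩ := hdirected y hy.1 y' hy'.1
    have h1 : z = y := hy.2 z hz hyz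
    have h2 : z = y' := hy'.2 z hz hy'z
    exact le_trans hxy' (le_of_eq (h2.symm.trans h1))
  have hPc_eq : (Pᶜ : Set X) = dwC ({y} : Set X) := by
    ext x
    constructor
    · intro hx
      exact ⟨y, rfl, htop x hx⟩
    · rintro ⟨a, ha, hxa⟩
      rw [Set.mem_singleton_iff] at ha
      subst ha
      exact hPcdown hxa hy.1
  have hyY : y ∈ localicPts X := by
    show IsClopen (dwC ({y} : Set X))
    rw [← hPc_eq]
    exact hPclopen.compl
  have hyN : y ∈ N := by
    have hcompl : (Pᶜ : Set X) = dwC (N \ P) := by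
      conv_lhs => rw [← hPidem]
      simp only [jN, compl_compl]
    have hyP : y ∈ dwC (N \ P) := hcompl ▸ hy.1
    obtain ⟨n, hn, hyn⟩ := hyP
    have hnPc : n ∈ (Pᶜ : Set X) := hn.2
    have hne : n = y := le_antisymm (htop n hnPc) hyn
    exact hne ▸ hn.1
  exact hy.1 (hUP (hY ⟨hyN, hyY⟩))

end Statement14Aux

/-- Let `X` be an arithmetic L-space, `N = N_d` the nuclear subset
whose nucleus `j_N` is the `d`-nucleus, and `U` a clopen upset of `X`.
Then `cl (core_d U) = X` iff `Y_d ⊆ U`. -/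
theorem statement14 (hX : IsArithmeticLSpace X)
    (N : Set X) (hN : IsNuclearSub N)
    (hNd : ∀ U : Set X, IsClopen U → IsUpperSet U → jN N U = dOp U)
    (U : Set X) (hU : IsClopen U) (hUup : IsUpperSet U) :
    closure (coreD U) = Set.univ ↔ N ∩ localicPts X ⊆ U := by
  -- First, `closure (coreD U) = jN N U`.
  have hdU : dOp U = jN N U := (hNd U hU hUup).symm
  have h1 : coreD U ⊆ jN N U := by
    rintro x ⟨Wx, ⟨V, hVS, hVU, rfl⟩, hxW⟩
    have hVle : dOp V ⊆ dOp U := by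
      rw [← hNd V hVS.1 hVS.2.2.1, ← hNd U hU hUup]
      exact st14_jN_mono hVU
    exact hdU ▸ hVle hxW
  have hE : ⋃₀ {W : Set X | ∃ V ∈ ClopSUp X, V ⊆ U ∧ W = starC (starC V)} ⊆ coreD U := by
    rintro x ⟨Wx, ⟨V, hVS, hVU, rfl⟩, hxW⟩
    refine ⟨dOp V, ⟨V, hVS, hVU, rfl⟩, ?_⟩
    exact subset_closure ⟨starC (starC V), ⟨V, hVS, Subset.rfl, rfl⟩, hxW⟩
  have h2 : jN N U ⊆ closure (coreD U) := by
    rw [← hdU]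
    exact closure_mono hE
  have h3 : IsClosed (jN N U) := by
    rw [← hdU]
    exact isClosed_closure
  have hkey : closure (coreD U) = jN N U :=
    subset_antisymm (closure_minimal h1 h3) h2
  constructor
  · intro h
    intro x hx
    by_contra hxU
    have hxd : x ∈ dwC (N \ U) := ⟨x, ⟨hx.1, hxU⟩, le_refl x⟩
    have huniv : jN N U = Set.univ := by rw [← hkey]; exact h
    have hxj : x ∈ jN N U := by rw [huniv]; exact Set.mem_univ x
    exact hxj hxd
  · intro hYU
    have hNU : N ⊆ U := st14_main hX hN hNd hU hUup hYU
    rw [hkey]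
    have hdiff : N \ U = ∅ := Set.diff_eq_empty.mpr hNU
    have hdw : dwC (∅ : Set X) = ∅ := by
      ext x
      simp [dwC]
    rw [jN, hdiff, hdw, Set.compl_empty]
end

section
/- Let X be an arithmetic L-space. Then there exists a clopen Scott upset U of X with max X ⊆ U if and only if there exists a clopen Scott upset U of X with Y_d ⊆ U; and if such a clopen Scott upset exists, then min Y_d (topologized so that its open sets are the traces of clopen upsets of X) is compact. -/
/-!
Write `j = j_N = d`; on clopen upsets, `j U` is the set of points all of whose successors in
`N` lie in `U`. Since `j ∅ = d ∅ = ∅`, every point lies below a point of `N`, so `max X ⊆ N`;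
and a clopen Scott upset `U ⊇ max X` satisfies `X = U** ⊆ d U`, whence `N ⊆ U`.

For a clopen Scott upset `V`, the set `N ∩ V` is compact for directed joins of open upsets (in an
L-space such a join is the closure of the union): `V` is, because its minimal points are localic,
and `d` of a clopen upset is the closure of a directed union of such `V**`. For a compact `K ⊆ N`,
a clopen upset `m` maximal with `K ⊄ m` (Zorn) is `j`-fixed and prime, so by compactness of `X`
the set `N \ m` has a greatest element `z` and `X \ m = ↓z`; in particular `z ∈ Y_d \ m`.
With `K = N ∩ V` this shows that a clopen upset containing `Y_d` contains every `N ∩ V`, hence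
contains `N` because `d X = X`. If some clopen Scott upset contains `max X`, then `K = N` itself
is compact, `z` is minimal in `Y_d`, and so every clopen upset containing `min Y_d` contains `N`;
the Alexander subbasis theorem then makes `min Y_d` compact.
-/

open Set Topology

variable {X : Type*} [TopologicalSpace X] [PartialOrder X]

section Order

variable {α : Type*} [PartialOrder α]

lemma dwC_singleton (a : α) : dwC {a} = Iic a := by
  ext x
  simp [dwC]

lemma dwC_empty : dwC (∅ : Set α) = ∅ := by
  simp [dwC]

lemma dwC_univ : dwC (univ : Set α) = univ :=
  eq_univ_of_forall fun x => ⟨x, trivial, le_rfl⟩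

lemma dwC_eq_Iic_of_isGreatest {A : Set α} {z : α} (h : IsGreatest A z) : dwC A = Iic z :=
  Subset.antisymm (fun _ ⟨_, ha, hxa⟩ => hxa.trans (h.2 ha)) fun _ hx => ⟨z, h.1, hx⟩

lemma mem_minOf_iff {A : Set α} {x : α} : x ∈ minOf A ↔ Minimal (· ∈ A) x :=
  and_congr_right fun _ =>
    ⟨fun h _ hy hyx => (h _ hy hyx).ge, fun h _ hy hyx => le_antisymm hyx (h hy hyx)⟩

lemma mem_maxOf_iff {A : Set α} {x : α} : x ∈ maxOf A ↔ Maximal (· ∈ A) x :=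
  and_congr_right fun _ =>
    ⟨fun h _ hy hxy => (h _ hy hxy).le, fun h _ hy hxy => le_antisymm (h hy hxy) hxy⟩

lemma starC_starC_empty : starC (starC (∅ : Set α)) = ∅ := by
  rw [starC, starC, dwC_empty, compl_empty, dwC_univ, compl_univ]

lemma starC_starC_eq_univ {V : Set α} (h : dwC V = univ) : starC (starC V) = univ := by
  rw [starC, starC, h, compl_univ, dwC_empty, compl_empty]

lemma mem_jN {N U : Set α} {x : α} : x ∈ jN N U ↔ ∀ n ∈ N, x ≤ n → n ∈ U := by
  simp only [jN, dwC, mem_compl_iff, mem_ofPred_eq, mem_sdiff, not_exists, not_and, and_imp]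
  exact forall₂_congr fun _ _ => not_imp_not

lemma mem_of_mem_jN {N U : Set α} {n : α} (hn : n ∈ N) (h : n ∈ jN N U) : n ∈ U :=
  mem_jN.1 h n hn le_rfl

lemma subset_jN {N U : Set α} (hU : IsUpperSet U) : U ⊆ jN N U :=
  fun _ hx => mem_jN.2 fun _ _ hxn => hU hxn hx

lemma jN_subset_jN {N U V : Set α} (h : N ∩ U ⊆ V) : jN N U ⊆ jN N V :=
  fun _ hx => mem_jN.2 fun n hn hxn => h ⟨hn, mem_jN.1 hx n hn hxn⟩

lemma isUpperSet_jN (N U : Set α) : IsUpperSet (jN N U) :=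
  fun _ _ hab ha => mem_jN.2 fun n hn hbn => mem_jN.1 ha n hn (hab.trans hbn)

lemma jN_empty (N : Set α) : jN N ∅ = (dwC N)ᶜ := by
  simp [jN]

lemma jN_univ (N : Set α) : jN N univ = univ :=
  eq_univ_of_forall fun _ => mem_jN.2 fun _ _ _ => trivial

end Order

lemma mem_localicPts_iff {y : X} : y ∈ localicPts X ↔ IsClopen (Iic y) := by
  rw [← dwC_singleton]
  rfl

lemma IsNuclearSub.isClopen_jN {N U : Set X} (hN : IsNuclearSub N) (hU : IsClopen U) :
    IsClopen (jN N U) := by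
  rw [jN, sdiff_eq_compl_inter]
  exact (hN.2 _ hU.compl).compl

lemma IsLSpace.isClopen_closure (hX : IsLSpace X) {U : Set X} (hU : IsOpen U)
    (hU' : IsUpperSet U) : IsClopen (closure U) :=
  ⟨isClosed_closure, (hX.2 U hU hU').1⟩

lemma IsLSpace.isUpperSet_closure (hX : IsLSpace X) {U : Set X} (hU : IsOpen U)
    (hU' : IsUpperSet U) : IsUpperSet (closure U) :=
  (hX.2 U hU hU').2

lemma IsPriestley.isClosed_Ici (hP : IsPriestley X) (a : X) : IsClosed (Ici a) := by
  refine isOpen_compl_iff.1 (isOpen_iff_forall_mem_open.2 fun w hw => ?_)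
  obtain ⟨U, hU, hU', haU, hwU⟩ := hP.2 a w hw
  exact ⟨Uᶜ, fun x hx hax => hx (hU' hax haU), hU.compl.isOpen, hwU⟩

lemma IsPriestley.le_of_forall (hP : IsPriestley X) {x y : X}
    (h : ∀ U : Set X, IsClopen U → IsUpperSet U → x ∈ U → y ∈ U) : x ≤ y := by
  by_contra hxy
  obtain ⟨U, hU, hU', hxU, hyU⟩ := hP.2 x y hxy
  exact hyU (h U hU hU' hxU)

lemma IsPriestley.dual (hP : IsPriestley X) : IsPriestley Xᵒᵈ := by
  refine ⟨⟨hP.1.isCompact_univ⟩, fun x y hxy => ?_⟩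
  obtain ⟨U, hU, hU', hyU, hxU⟩ := hP.2 (OrderDual.ofDual y) (OrderDual.ofDual x) hxy
  exact ⟨OrderDual.ofDual ⁻¹' Uᶜ, hU.compl, hU'.compl.toDual, hxU, fun h => h hyU⟩

lemma IsPriestley.exists_le_maximal (hP : IsPriestley X) {F : Set X} (hF : IsClosed F)
    {x : X} (hx : x ∈ F) : ∃ m, x ≤ m ∧ Maximal (· ∈ F) m := by
  have := hP.1
  refine zorn_le_nonempty₀ F (fun c hcF hc y hy => ?_) x hx
  have : Nonempty c := ⟨⟨y, hy⟩⟩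
  have hdir : Directed (· ⊇ ·) fun a : c => Ici (a : X) ∩ F := by
    intro a b
    rcases hc.total a.2 b.2 with hab | hba
    · exact ⟨b, inter_subset_inter_left F (Ici_subset_Ici.2 hab), subset_rfl⟩
    · exact ⟨a, subset_rfl, inter_subset_inter_left F (Ici_subset_Ici.2 hba)⟩
  obtain ⟨u, hu⟩ := IsCompact.nonempty_iInter_of_directed_nonempty_isCompact_isClosed _ hdir
    (fun a => ⟨a, mem_Ici.2 le_rfl, hcF a.2⟩)
    (fun a => ((hP.isClosed_Ici a).inter hF).isCompact) (fun a => (hP.isClosed_Ici a).inter hF)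
  rw [mem_iInter] at hu
  exact ⟨u, (hu ⟨y, hy⟩).2, fun a ha => (hu ⟨a, ha⟩).1⟩

lemma IsPriestley.exists_minimal_le (hP : IsPriestley X) {F : Set X} (hF : IsClosed F)
    {x : X} (hx : x ∈ F) : ∃ q ≤ x, Minimal (· ∈ F) q :=
  hP.dual.exists_le_maximal (F := OrderDual.ofDual ⁻¹' F) hF hx

lemma empty_mem_clopSUp : (∅ : Set X) ∈ ClopSUp X :=
  ⟨isClopen_empty, isClosed_empty, isUpperSet_empty, fun _ hx => hx.1.elim⟩

lemma union_mem_clopSUp {V W : Set X} (hV : V ∈ ClopSUp X) (hW : W ∈ ClopSUp X) :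
    V ∪ W ∈ ClopSUp X := by
  refine ⟨hV.1.union hW.1, hV.2.1.union hW.2.1, hV.2.2.1.union hW.2.2.1, fun x hx => ?_⟩
  rcases hx.1 with hxV | hxW
  · exact hV.2.2.2 ⟨hxV, fun z hz hzx => hx.2 z (Or.inl hz) hzx⟩
  · exact hW.2.2.2 ⟨hxW, fun z hz hzx => hx.2 z (Or.inr hz) hzx⟩

lemma starC_starC_subset_dOp {U V : Set X} (hV : V ∈ ClopSUp X) (hVU : V ⊆ U) :
    starC (starC V) ⊆ dOp U := by
  refine subset_sUnion_of_mem ?_ |>.trans subset_closure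
  exact ⟨V, hV, hVU, rfl⟩

lemma dOp_empty : dOp (∅ : Set X) = ∅ := by
  rw [dOp, closure_empty_iff, sUnion_eq_empty]
  rintro _ ⟨V, -, hV, rfl⟩
  rw [subset_empty_iff.1 hV, starC_starC_empty]

section Nucleus

variable {N : Set X}

lemma dwC_eq_univ_of_jN_eq_dOp
    (hNd : ∀ U : Set X, IsClopen U → IsUpperSet U → jN N U = dOp U) : dwC N = univ := by
  simpa [jN_empty, dOp_empty] using hNd ∅ isClopen_empty isUpperSet_empty

lemma maxOf_univ_subset (hNd : ∀ U : Set X, IsClopen U → IsUpperSet U → jN N U = dOp U) :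
    maxOf (univ : Set X) ⊆ N := by
  intro m hm
  obtain ⟨n, hn, hmn⟩ : m ∈ dwC N := (dwC_eq_univ_of_jN_eq_dOp hNd).symm ▸ mem_univ m
  rwa [hm.2 n trivial hmn] at hn

lemma jN_subset_closure_sUnion
    (hNd : ∀ U : Set X, IsClopen U → IsUpperSet U → jN N U = dOp U) {U : Set X}
    (hU : IsClopen U) (hU' : IsUpperSet U) :
    jN N U ⊆ closure (⋃₀ (jN N '' {W | W ∈ ClopSUp X ∧ W ⊆ U})) := by
  rw [hNd U hU hU']
  refine closure_mono (sUnion_subset ?_)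
  rintro _ ⟨W, hW, hWU, rfl⟩
  refine (starC_starC_subset_dOp hW subset_rfl).trans ?_
  rw [← hNd W hW.1 hW.2.2.1]
  exact subset_sUnion_of_mem ⟨W, ⟨hW, hWU⟩, rfl⟩

lemma subset_of_forall_inter_subset (hN : IsNuclearSub N)
    (hNd : ∀ U : Set X, IsClopen U → IsUpperSet U → jN N U = dOp U) {U : Set X}
    (hU : IsClopen U) (h : ∀ W ∈ ClopSUp X, N ∩ W ⊆ U) : N ⊆ U := by
  have huniv : jN N univ ⊆ jN N U := by
    refine (jN_subset_closure_sUnion hNd isClopen_univ isUpperSet_univ).trans ?_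
    refine closure_minimal (sUnion_subset ?_) (hN.isClopen_jN hU).isClosed
    rintro _ ⟨W, ⟨hW, -⟩, rfl⟩
    exact jN_subset_jN (h W hW)
  exact fun n hn => mem_of_mem_jN hn (huniv (by rw [jN_univ]; trivial))

lemma subset_of_maxOf_subset (hP : IsPriestley X)
    (hNd : ∀ U : Set X, IsClopen U → IsUpperSet U → jN N U = dOp U) {U : Set X}
    (hU : U ∈ ClopSUp X) (h : maxOf (univ : Set X) ⊆ U) : N ⊆ U := by
  have hdwC : dwC U = univ := eq_univ_of_forall fun x => by
    obtain ⟨m, hxm, hm⟩ := hP.exists_le_maximal isClosed_univ (mem_univ x)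
    exact ⟨m, h (mem_maxOf_iff.2 hm), hxm⟩
  have hjN : jN N U = univ := by
    rw [hNd U hU.1 hU.2.2.1, ← univ_subset_iff, ← starC_starC_eq_univ hdwC]
    exact starC_starC_subset_dOp hU subset_rfl
  exact fun n hn => mem_of_mem_jN hn (by rw [hjN]; trivial)

end Nucleus

/-- Compactness of `K` for directed joins in the frame of clopen upsets of an L-space, where the
join of a family of open upsets is the closure of its union. -/
def IsDirectedCompact (K : Set X) : Prop :=
  ∀ S : Set (Set X), S.Nonempty → DirectedOn (· ⊆ ·) S →
    (∀ A ∈ S, IsOpen A ∧ IsUpperSet A) → K ⊆ closure (⋃₀ S) → ∃ A ∈ S, K ⊆ A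

lemma isDirectedCompact_of_mem_clopSUp (hP : IsPriestley X) {V : Set X} (hV : V ∈ ClopSUp X) :
    IsDirectedCompact V := by
  intro S hne hdir hS hVS
  have hVsub : V ⊆ ⋃₀ S := by
    intro x hx
    obtain ⟨q, hqx, hq⟩ := hP.exists_minimal_le hV.2.1 hx
    have hqY : IsClopen (Iic q) := mem_localicPts_iff.1 (hV.2.2.2 (mem_minOf_iff.2 hq))
    obtain ⟨w, hwq, A, hA, hwA⟩ := mem_closure_iff.1 (hVS hq.1) _ hqY.isOpen (mem_Iic.2 le_rfl)
    exact ⟨A, hA, (hS A hA).2 (hwq.trans hqx) hwA⟩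
  have := hP.1
  have := hne.to_subtype
  obtain ⟨A, hA⟩ := hV.2.1.isCompact.elim_directed_cover (fun A : S => (A : Set X))
    (fun A => (hS A A.2).1) (by rwa [← sUnion_eq_iUnion]) hdir.directed_val
  exact ⟨A, A.2, hA⟩

lemma isDirectedCompact_inter (hX : IsLSpace X) {N : Set X} (hN : IsNuclearSub N)
    (hNd : ∀ U : Set X, IsClopen U → IsUpperSet U → jN N U = dOp U) {V : Set X}
    (hV : V ∈ ClopSUp X) : IsDirectedCompact (N ∩ V) := by
  intro S hne hdir hS hNV
  have hSo : IsOpen (⋃₀ S) := isOpen_sUnion fun A hA => (hS A hA).1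
  have hSu : IsUpperSet (⋃₀ S) := isUpperSet_sUnion fun A hA => (hS A hA).2
  set C := closure (⋃₀ S)
  have hVC : V ⊆ jN N C :=
    fun x hx => mem_jN.2 fun n hn hxn => hNV ⟨hn, hV.2.2.1 hxn hx⟩
  set T := jN N '' {W | W ∈ ClopSUp X ∧ W ⊆ C}
  have hTdir : DirectedOn (· ⊆ ·) T := by
    rintro _ ⟨W₁, h₁, rfl⟩ _ ⟨W₂, h₂, rfl⟩
    refine ⟨jN N (W₁ ∪ W₂), mem_image_of_mem _ ?_, jN_subset_jN ?_, jN_subset_jN ?_⟩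
    · exact ⟨union_mem_clopSUp h₁.1 h₂.1, union_subset h₁.2 h₂.2⟩
    · exact inter_subset_right.trans subset_union_left
    · exact inter_subset_right.trans subset_union_right
  have hT : ∀ A ∈ T, IsOpen A ∧ IsUpperSet A := by
    rintro _ ⟨W, hW, rfl⟩
    exact ⟨(hN.isClopen_jN hW.1.1).isOpen, isUpperSet_jN N W⟩
  have hVT : V ⊆ closure (⋃₀ T) := hVC.trans (jN_subset_closure_sUnion hNd
    (hX.isClopen_closure hSo hSu) (hX.isUpperSet_closure hSo hSu))
  obtain ⟨_, ⟨W, ⟨hW, hWC⟩, rfl⟩, hVW⟩ := isDirectedCompact_of_mem_clopSUp hX.1 hV T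
    ⟨_, mem_image_of_mem _ ⟨empty_mem_clopSUp, empty_subset C⟩⟩ hTdir hT hVT
  obtain ⟨A, hA, hWA⟩ := isDirectedCompact_of_mem_clopSUp hX.1 hW S hne hdir hS hWC
  exact ⟨A, hA, fun n hn => hWA (mem_of_mem_jN hn.1 (hVW hn.2))⟩

def clopenUpperNotContaining (K : Set X) : Set (Set X) :=
  {m | IsClopen m ∧ IsUpperSet m ∧ ¬ K ⊆ m}

lemma exists_maximal_clopenUpperNotContaining (hX : IsLSpace X) {K b : Set X}
    (hK : IsDirectedCompact K) (hb : b ∈ clopenUpperNotContaining K) :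
    ∃ m, b ⊆ m ∧ Maximal (· ∈ clopenUpperNotContaining K) m := by
  refine zorn_subset_nonempty _ (fun c hc hchain hne => ?_) b hb
  have hco : IsOpen (⋃₀ c) := isOpen_sUnion fun A hA => (hc hA).1.isOpen
  have hcu : IsUpperSet (⋃₀ c) := isUpperSet_sUnion fun A hA => (hc hA).2.1
  refine ⟨closure (⋃₀ c), ⟨hX.isClopen_closure hco hcu, hX.isUpperSet_closure hco hcu, ?_⟩,
    fun A hA => (subset_sUnion_of_mem hA).trans subset_closure⟩
  intro hKc
  obtain ⟨A, hA, hKA⟩ :=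
    hK c hne hchain.directedOn (fun A hA => ⟨(hc hA).1.isOpen, (hc hA).2.1⟩) hKc
  exact (hc hA).2.2 hKA

section MaximalNotContaining

variable {K m : Set X}

lemma Maximal.not_inter_subset (hm : Maximal (· ∈ clopenUpperNotContaining K) m)
    {U V : Set X} (hU : IsClopen U) (hU' : IsUpperSet U)
    (hV : IsClopen V) (hV' : IsUpperSet V) (hUm : ¬ U ⊆ m) (hVm : ¬ V ⊆ m) :
    ¬ K ∩ (U ∩ V) ⊆ m := by
  have hK : ∀ {W}, IsClopen W → IsUpperSet W → ¬ W ⊆ m → K ⊆ m ∪ W := by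
    intro W hW hW' hWm
    by_contra h
    exact hWm (subset_union_right.trans
      (hm.2 ⟨hm.1.1.union hW, hm.1.2.1.union hW', h⟩ subset_union_left))
  intro h
  refine hm.1.2.2 fun x hx => ?_
  obtain hxm | hxU := hK hU hU' hUm hx
  · exact hxm
  obtain hxm | hxV := hK hV hV' hVm hx
  · exact hxm
  exact h ⟨hx, hxU, hxV⟩

lemma Maximal.jN_eq (hm : Maximal (· ∈ clopenUpperNotContaining K) m) {N : Set X}
    (hN : IsNuclearSub N) (hKN : K ⊆ N) : jN N m = m := by
  refine Subset.antisymm (hm.2 ⟨hN.isClopen_jN hm.1.1, isUpperSet_jN N m, fun hK => ?_⟩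
    (subset_jN hm.1.2.1)) (subset_jN hm.1.2.1)
  exact hm.1.2.2 fun x hx => mem_of_mem_jN (hKN hx) (hK hx)

end MaximalNotContaining

lemma IsPriestley.exists_isGreatest_sdiff (hP : IsPriestley X) {N m : Set X} (hN : IsClosed N)
    (hm : IsOpen m) (hNm : ¬ N ⊆ m)
    (hprime : ∀ U V : Set X, IsClopen U → IsUpperSet U → IsClopen V → IsUpperSet V →
      ¬ N ∩ U ⊆ m → ¬ N ∩ V ⊆ m → ¬ N ∩ (U ∩ V) ⊆ m) :
    ∃ z, IsGreatest (N \ m) z := by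
  have := hP.1
  let ι := {U : Set X // IsClopen U ∧ IsUpperSet U ∧ ¬ N ∩ U ⊆ m}
  have : Nonempty ι := ⟨⟨univ, isClopen_univ, isUpperSet_univ, by rwa [inter_univ]⟩⟩
  have hdir : Directed (· ⊇ ·) fun U : ι => N \ m ∩ U := fun U V =>
    ⟨⟨U ∩ V, U.2.1.inter V.2.1, U.2.2.1.inter V.2.2.1,
      hprime U V U.2.1 U.2.2.1 V.2.1 V.2.2.1 U.2.2.2 V.2.2.2⟩,
      inter_subset_inter_right _ inter_subset_left, inter_subset_inter_right _ inter_subset_right⟩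
  have hne : ∀ U : ι, (N \ m ∩ U).Nonempty := fun U => by
    obtain ⟨x, ⟨hxN, hxU⟩, hxm⟩ := not_subset.1 U.2.2.2
    exact ⟨x, ⟨hxN, hxm⟩, hxU⟩
  have hcl : ∀ U : ι, IsClosed (N \ m ∩ U) := fun U => (hN.sdiff hm).inter U.2.1.isClosed
  obtain ⟨z, hz⟩ := IsCompact.nonempty_iInter_of_directed_nonempty_isCompact_isClosed _ hdir hne
    (fun U => (hcl U).isCompact) hcl
  rw [mem_iInter] at hz
  refine ⟨z, (hz ⟨univ, isClopen_univ, isUpperSet_univ, by rwa [inter_univ]⟩).1, ?_⟩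
  intro n hn
  refine hP.le_of_forall fun U hU hU' hnU => ?_
  exact (hz ⟨U, hU, hU', fun h => hn.2 (h ⟨hn.1, hnU⟩)⟩).2

lemma Maximal.exists_compl_eq_Iic (hP : IsPriestley X) {K m N : Set X}
    (hm : Maximal (· ∈ clopenUpperNotContaining K) m) (hN : IsNuclearSub N) (hKN : K ⊆ N) :
    ∃ z ∈ N, mᶜ = Iic z := by
  obtain ⟨z, hz⟩ := hP.exists_isGreatest_sdiff hN.1 hm.1.1.isOpen
    (fun h => hm.1.2.2 (hKN.trans h)) fun U V hU hU' hV hV' hUm hVm h =>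
      hm.not_inter_subset hU hU' hV hV' (fun h' => hUm (inter_subset_right.trans h'))
        (fun h' => hVm (inter_subset_right.trans h')) fun x hx => h ⟨hKN hx.1, hx.2⟩
  refine ⟨z, hz.1.1, ?_⟩
  rw [← hm.jN_eq hN hKN, jN, compl_compl, dwC_eq_Iic_of_isGreatest hz]

lemma mem_localicPts_of_compl_eq_Iic {m : Set X} (hm : IsClopen m) {z : X} (hz : mᶜ = Iic z) :
    z ∈ localicPts X :=
  mem_localicPts_iff.2 (hz ▸ hm.compl)

lemma Maximal.mem_minOf {N m : Set X} (hm : Maximal (· ∈ clopenUpperNotContaining N) m)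
    {z : X} (hzN : z ∈ N) (hz : mᶜ = Iic z) : z ∈ minOf (N ∩ localicPts X) := by
  refine ⟨⟨hzN, mem_localicPts_of_compl_eq_Iic hm.1.1 hz⟩, ?_⟩
  rintro z' ⟨hz'N, hz'Y⟩ hz'z
  have hz' : (Iic z')ᶜ ∈ clopenUpperNotContaining N :=
    ⟨(mem_localicPts_iff.1 hz'Y).compl, isLowerSet_Iic z' |>.compl,
      fun h => h hz'N (mem_Iic.2 le_rfl)⟩
  have hmz' : m ⊆ (Iic z')ᶜ := fun x hxm hxz' =>
    (hz.symm ▸ mem_Iic.2 (mem_Iic.1 hxz' |>.trans hz'z) : x ∈ mᶜ) hxm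
  have hzz' : z ∈ Iic z' := by
    by_contra h
    exact (hz ▸ mem_Iic.2 le_rfl : z ∈ mᶜ) (hm.2 hz' hmz' h)
  exact le_antisymm hz'z hzz'

section Points

variable {N : Set X}

lemma subset_of_inter_localicPts_subset (hX : IsLSpace X) (hN : IsNuclearSub N)
    (hNd : ∀ U : Set X, IsClopen U → IsUpperSet U → jN N U = dOp U) {U : Set X}
    (hU : IsClopen U) (hU' : IsUpperSet U) (h : N ∩ localicPts X ⊆ U) : N ⊆ U := by
  refine subset_of_forall_inter_subset hN hNd hU fun W hW => ?_
  by_contra hWU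
  obtain ⟨m, hUm, hm⟩ := exists_maximal_clopenUpperNotContaining hX
    (isDirectedCompact_inter hX hN hNd hW) ⟨hU, hU', hWU⟩
  obtain ⟨z, hzN, hz⟩ := hm.exists_compl_eq_Iic hX.1 hN inter_subset_left
  have hzm : z ∈ mᶜ := hz ▸ mem_Iic.2 le_rfl
  exact hzm (hUm (h ⟨hzN, mem_localicPts_of_compl_eq_Iic hm.1.1 hz⟩))

lemma subset_of_minOf_subset (hX : IsLSpace X) (hN : IsNuclearSub N)
    (hNc : IsDirectedCompact N) {C : Set X} (hC : IsClopen C) (hC' : IsUpperSet C)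
    (h : minOf (N ∩ localicPts X) ⊆ C) : N ⊆ C := by
  by_contra hNC
  obtain ⟨m, hCm, hm⟩ := exists_maximal_clopenUpperNotContaining hX hNc ⟨hC, hC', hNC⟩
  obtain ⟨z, hzN, hz⟩ := hm.exists_compl_eq_Iic hX.1 hN subset_rfl
  have hzm : z ∈ mᶜ := hz ▸ mem_Iic.2 le_rfl
  exact hzm (hCm (h (hm.mem_minOf hzN hz)))

lemma exists_finite_subcover_minOf (hX : IsLSpace X) (hN : IsNuclearSub N)
    (hNc : IsDirectedCompact N) {P : Set (Set X)} (hP : ∀ U ∈ P, IsClopen U ∧ IsUpperSet U)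
    (hcov : minOf (N ∩ localicPts X) ⊆ ⋃₀ P) :
    ∃ Q ⊆ P, Q.Finite ∧ minOf (N ∩ localicPts X) ⊆ ⋃₀ Q := by
  set S := sUnion '' {Q | Q ⊆ P ∧ Q.Finite}
  have hS : ∀ A ∈ S, IsOpen A ∧ IsUpperSet A := by
    rintro _ ⟨Q, ⟨hQ, -⟩, rfl⟩
    exact ⟨isOpen_sUnion fun U hU => (hP U (hQ hU)).1.isOpen,
      isUpperSet_sUnion fun U hU => (hP U (hQ hU)).2⟩
  have hSdir : DirectedOn (· ⊆ ·) S := by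
    rintro _ ⟨Q₁, ⟨hQ₁, hQ₁f⟩, rfl⟩ _ ⟨Q₂, ⟨hQ₂, hQ₂f⟩, rfl⟩
    exact ⟨_, mem_image_of_mem _ ⟨union_subset hQ₁ hQ₂, hQ₁f.union hQ₂f⟩,
      sUnion_mono subset_union_left, sUnion_mono subset_union_right⟩
  have hPS : ⋃₀ P ⊆ ⋃₀ S := fun x ⟨U, hU, hxU⟩ =>
    ⟨U, ⟨{U}, ⟨singleton_subset_iff.2 hU, finite_singleton U⟩, sUnion_singleton U⟩, hxU⟩
  have hSo : IsOpen (⋃₀ S) := isOpen_sUnion fun A hA => (hS A hA).1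
  have hSu : IsUpperSet (⋃₀ S) := isUpperSet_sUnion fun A hA => (hS A hA).2
  have hNS : N ⊆ closure (⋃₀ S) :=
    subset_of_minOf_subset hX hN hNc (hX.isClopen_closure hSo hSu)
      (hX.isUpperSet_closure hSo hSu) (hcov.trans (hPS.trans subset_closure))
  obtain ⟨_, ⟨Q, ⟨hQ, hQf⟩, rfl⟩, hNQ⟩ :=
    hNc S ⟨_, mem_image_of_mem _ ⟨empty_subset P, finite_empty⟩⟩ hSdir hS hNS
  exact ⟨Q, hQ, hQf, fun x hx => hNQ hx.1.1⟩

lemma compactSpace_traceTop_minOf (hX : IsLSpace X) (hN : IsNuclearSub N)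
    (hNc : IsDirectedCompact N) : @CompactSpace _ (traceTop (minOf (N ∩ localicPts X))) := by
  let _ := traceTop (minOf (N ∩ localicPts X))
  refine compactSpace_generateFrom rfl fun P hP hcov => ?_
  obtain ⟨Q, hQ, hQf, hQcov⟩ := exists_finite_subcover_minOf hX hN hNc
    (P := {U | IsClopen U ∧ IsUpperSet U ∧ Subtype.val ⁻¹' U ∈ P})
    (fun U hU => ⟨hU.1, hU.2.1⟩) fun x hx => by
      obtain ⟨_, hVP, hxV⟩ := hcov.symm ▸ mem_univ (⟨x, hx⟩ : minOf (N ∩ localicPts X))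
      obtain ⟨U, hU, hU', rfl⟩ := hP hVP
      exact ⟨U, ⟨hU, hU', hVP⟩, hxV⟩
  refine ⟨(Subtype.val ⁻¹' ·) '' Q, ?_, hQf.image _, eq_univ_of_forall fun x => ?_⟩
  · rintro _ ⟨U, hU, rfl⟩
    exact (hQ hU).2.2
  · obtain ⟨U, hUQ, hxU⟩ := hQcov x.2
    exact ⟨_, mem_image_of_mem _ hUQ, hxU⟩

end Points

/-- Let `X` be an arithmetic L-space and `N = N_d` the nuclear subset
whose nucleus `j_N` is the `d`-nucleus, with `Y_d = N_d ∩ Y`. Then there is a clopen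
Scott upset containing `max X` iff there is one containing `Y_d`; and if such a clopen
Scott upset exists, then `min Y_d` (with the topology whose opens are the traces of
clopen upsets of `X`) is compact. -/
theorem statement18 (hX : IsArithmeticLSpace X)
    (N : Set X) (hN : IsNuclearSub N)
    (hNd : ∀ U : Set X, IsClopen U → IsUpperSet U → jN N U = dOp U) :
    ((∃ U ∈ ClopSUp X, maxOf (Set.univ : Set X) ⊆ U) ↔
      (∃ U ∈ ClopSUp X, N ∩ localicPts X ⊆ U)) ∧
    ((∃ U ∈ ClopSUp X, maxOf (Set.univ : Set X) ⊆ U) →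
      @CompactSpace _ (traceTop (minOf (N ∩ localicPts X)))) := by
  have hL : IsLSpace X := hX.1.1
  have hNU : ∀ U ∈ ClopSUp X, maxOf univ ⊆ U → N ⊆ U :=
    fun U hU => subset_of_maxOf_subset hL.1 hNd hU
  have hiff : (∃ U ∈ ClopSUp X, maxOf univ ⊆ U) ↔ ∃ U ∈ ClopSUp X, N ∩ localicPts X ⊆ U := by
    constructor
    · rintro ⟨U, hU, h⟩
      exact ⟨U, hU, inter_subset_left.trans (hNU U hU h)⟩
    · rintro ⟨U, hU, h⟩
      exact ⟨U, hU, (maxOf_univ_subset hNd).trans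
        (subset_of_inter_localicPts_subset hL hN hNd hU.1 hU.2.2.1 h)⟩
  refine ⟨hiff, fun ⟨U, hU, h⟩ => ?_⟩
  have hNc : IsDirectedCompact N := by
    simpa [inter_eq_left.2 (hNU U hU h)] using isDirectedCompact_inter hL hN hNd hU
  exact compactSpace_traceTop_minOf hL hN hNc
end
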